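/- Let U = T_D (D ≥ 1) with the Pommaret relative involutive division M_P(u) = { i | i ≤ min(u) }, and let G_U be the Ufnarovsky-like graph on U: there is an edge t → s if and only if there exists an index j ∉ M_P(s) with s + e_j ∈ C(t). Let M_set ⊆ U and let J = { u + v | u ∈ M_set, v : Fin n → ℕ } be the semigroup ideal generated by M_set. Then J = ⋃_{l ∈ M_set} C(l) if and only if M_set is Ufnarovsky-compliant, i.e. for all s, t ∈ U with an edge t → s in G_U and s ∈ M_set, also t ∈ M_set. -/
import Mathlib


/-- The degree of an exponent vector: the sum of the exponents. -/
def deg {n : ℕ} (u : Fin n → ℕ) : ℕ := ∑ i, u i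

/-- The support of an exponent vector: the indices with nonzero exponent. -/
def supp {n : ℕ} (u : Fin n → ℕ) : Set (Fin n) := {i | u i ≠ 0}

/-- Given an assignment `M` of multiplicative variables, the cone of `u` is the set
of all `u + v` where the support of `v` is contained in `M u`. -/
def cone {n : ℕ} (M : (Fin n → ℕ) → Set (Fin n)) (u : Fin n → ℕ) :
    Set (Fin n → ℕ) :=
  {w | ∃ v : Fin n → ℕ, supp v ⊆ M u ∧ w = u + v}

lemma deg_add {n : ℕ} (a b : Fin n → ℕ) : deg (a + b) = deg a + deg b := by
  simp [deg, Finset.sum_add_distrib]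

lemma deg_single {n : ℕ} (j : Fin n) : deg (Pi.single j 1 : Fin n → ℕ) = 1 := by
  simp [deg]

lemma eq_of_le_of_deg_eq {n : ℕ} {f g : Fin n → ℕ} (h : ∀ i, f i ≤ g i)
    (hd : deg f = deg g) : f = g := by
  funext i
  by_contra hne
  have hlt : deg f < deg g :=
    Finset.sum_lt_sum (fun i _ => h i) ⟨i, Finset.mem_univ i, lt_of_le_of_ne (h i) hne⟩
  omega

lemma exists_min {n : ℕ} (w : Fin n → ℕ) (hw : deg w ≠ 0) :
    ∃ k, w k ≠ 0 ∧ ∀ i < k, w i = 0 := by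
  have hne : (Finset.univ.filter (fun i => w i ≠ 0)).Nonempty := by
    by_contra h
    apply hw
    rw [Finset.not_nonempty_iff_eq_empty, Finset.filter_eq_empty_iff] at h
    exact Finset.sum_eq_zero fun i _ => by
      by_contra hi; exact h (Finset.mem_univ i) hi
  refine ⟨(Finset.univ.filter (fun i => w i ≠ 0)).min' hne, ?_, ?_⟩
  · have := (Finset.univ.filter (fun i => w i ≠ 0)).min'_mem hne
    simpa using this
  · intro i hi
    by_contra hiz
    have : (Finset.univ.filter (fun i => w i ≠ 0)).min' hne ≤ i :=
      Finset.min'_le _ _ (by simp [hiz])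
    omega

/-- canonical Pommaret form data -/
def IsCan {n : ℕ} (D : ℕ) (t : Fin n → ℕ) (k : Fin n) (w : Fin n → ℕ) : Prop :=
  deg t = D ∧ t k ≠ 0 ∧ (∀ i < k, t i = 0) ∧ (∀ i, k < i → w i = t i) ∧ t k ≤ w k

lemma can_unique {n D : ℕ} {w t t' : Fin n → ℕ} {k k' : Fin n}
    (h : IsCan D t k w) (h' : IsCan D t' k' w) : t = t' := by
  obtain ⟨hd, hk, hlow, heq, hle⟩ := h
  obtain ⟨hd', hk', hlow', heq', hle'⟩ := h'
  rcases lt_trichotomy k k' with hkk | hkk | hkk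
  · -- t' ≤ t pointwise
    have hpt : ∀ i, t' i ≤ t i := by
      intro i
      rcases lt_trichotomy i k' with h1 | h1 | h1
      · simp [hlow' i h1]
      · subst h1
        calc t' i ≤ w i := hle'
        _ = t i := heq i (by omega)
      · rw [← heq i (lt_trans hkk h1), heq' i h1]
    have := eq_of_le_of_deg_eq hpt (by omega)
    exact this.symm
  · -- k = k'
    subst hkk
    have hoff : ∀ i, i ≠ k → t i = t' i := by
      intro i hi
      rcases lt_trichotomy i k with h1 | h1 | h1
      · rw [hlow i h1, hlow' i h1]
      · exact absurd h1 hi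
      · rw [← heq i h1, heq' i h1]
    rcases le_total (t k) (t' k) with hc | hc
    · refine eq_of_le_of_deg_eq ?_ (by omega)
      intro i
      rcases eq_or_ne i k with rfl | hi
      · exact hc
      · exact (hoff i hi).le
    · refine (eq_of_le_of_deg_eq ?_ (by omega)).symm
      intro i
      rcases eq_or_ne i k with rfl | hi
      · exact hc
      · exact (hoff i hi).symm.le
  · have hpt : ∀ i, t i ≤ t' i := by
      intro i
      rcases lt_trichotomy i k with h1 | h1 | h1
      · simp [hlow i h1]
      · subst h1
        calc t i ≤ w i := hle
        _ = t' i := heq' i (by omega)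
      · rw [← heq' i (lt_trans hkk h1), heq i h1]
    exact eq_of_le_of_deg_eq hpt (by omega)

lemma exists_can {n : ℕ} (D : ℕ) (hD : 1 ≤ D) :
    ∀ m, ∀ w : Fin n → ℕ, deg w = m → D ≤ m → ∃ t k, IsCan D t k w := by
  intro m
  induction m using Nat.strong_induction_on with
  | _ m ih =>
    intro w hw hDm
    obtain ⟨j, hj, hjmin⟩ := exists_min w (by omega)
    rcases eq_or_lt_of_le hDm with hm | hm
    · exact ⟨w, j, hw.trans hm.symm, hj, hjmin, fun i _ => rfl, le_refl _⟩
    · set w' : Fin n → ℕ := w - Pi.single j 1 with hw'def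
      have hwe : w = w' + Pi.single j 1 := by
        funext i
        rcases eq_or_ne i j with rfl | hi
        · simp [hw'def, Pi.sub_apply]
          omega
        · simp [hw'def, Pi.sub_apply, Pi.single_eq_of_ne hi]
      have hdw' : deg w' = m - 1 := by
        have := deg_add w' (Pi.single j 1)
        rw [← hwe, hw, deg_single] at this
        omega
      obtain ⟨t, k, hcan⟩ := ih (m - 1) (by omega) w' hdw' (by omega)
      obtain ⟨hd, hk, hlow, heq, hle⟩ := hcan
      have hw'le : ∀ i, w' i ≤ w i := by
        intro i; rw [hw'def]; simp [Pi.sub_apply]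
      have hjk : j ≤ k := by
        by_contra h
        push_neg at h
        have : w k = 0 := hjmin k h
        have : w' k = 0 := by have := hw'le k; omega
        omega
      refine ⟨t, k, hd, hk, hlow, ?_, le_trans hle (hw'le k)⟩
      intro i hi
      rw [← heq i hi, hwe]
      have : i ≠ j := by omega
      simp [Pi.single_eq_of_ne this]

lemma mem_cone_iff {n D : ℕ} {M : (Fin n → ℕ) → Set (Fin n)}
    (hM : ∀ u : Fin n → ℕ, deg u = D →
      ∀ j : Fin n, (u j ≠ 0 ∧ ∀ i < j, u i = 0) → M u = {i : Fin n | i ≤ j})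
    {t : Fin n → ℕ} {k : Fin n} (ht : deg t = D)
    (hk : t k ≠ 0) (hlow : ∀ i < k, t i = 0) (w : Fin n → ℕ) :
    w ∈ cone M t ↔ ((∀ i, k < i → w i = t i) ∧ t k ≤ w k) := by
  have hMt : M t = {i : Fin n | i ≤ k} := hM t ht k ⟨hk, hlow⟩
  constructor
  · rintro ⟨v, hsupp, rfl⟩
    constructor
    · intro i hi
      have hv : v i = 0 := by
        by_contra hvi
        have : i ∈ M t := hsupp hvi
        rw [hMt] at this
        exact absurd this (by simp; omega)
      simp [Pi.add_apply, hv]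
    · simp [Pi.add_apply]
  · rintro ⟨heq, hle⟩
    refine ⟨fun i => w i - t i, ?_, ?_⟩
    · intro i hi
      rw [hMt]
      simp only [Set.mem_setOf_eq]
      by_contra h
      push_neg at h
      have := heq i h
      simp only [supp, Set.mem_setOf_eq] at hi
      omega
    · funext i
      simp only [Pi.add_apply]
      rcases lt_trichotomy i k with h1 | h1 | h1
      · have := hlow i h1; omega
      · subst h1; omega
      · have := heq i h1; omega

/-- Let `M` be the Pommaret division on `U = T_D` (multiplicative variables of
`u` are `{i | i ≤ min(u)}`). In the Ufnarovsky-like graph there is an edge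
`t → s` iff some non-multiplicative index `j` of `s` satisfies
`s + e_j ∈ C(t)`. For `Mset ⊆ U`, the semigroup ideal generated by `Mset`
equals the union of the cones of the elements of `Mset` iff `Mset` is
Ufnarovsky-compliant: whenever there is an edge `t → s` with `s ∈ Mset`,
also `t ∈ Mset`. -/
theorem pommaret_ideal_iff_ufnarovsky_compliant (n D : ℕ) (hn : 1 ≤ n)
    (hD : 1 ≤ D) (M : (Fin n → ℕ) → Set (Fin n))
    (hM : ∀ u : Fin n → ℕ, deg u = D →
      ∀ j : Fin n, (u j ≠ 0 ∧ ∀ i < j, u i = 0) → M u = {i : Fin n | i ≤ j})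
    (Mset : Set (Fin n → ℕ)) (hMset : Mset ⊆ {u : Fin n → ℕ | deg u = D}) :
    {w : Fin n → ℕ | ∃ u ∈ Mset, ∃ v : Fin n → ℕ, w = u + v} =
        (⋃ l ∈ Mset, cone M l) ↔
      (∀ t s : Fin n → ℕ, deg t = D → deg s = D →
        (∃ j : Fin n, j ∉ M s ∧ s + Pi.single j 1 ∈ cone M t) →
        s ∈ Mset → t ∈ Mset) := by
  constructor
  · intro hJ t s hdt hds hedge hs
    obtain ⟨j, hjM, hmem⟩ := hedge
    have hx : (s + Pi.single j 1) ∈ {w : Fin n → ℕ | ∃ u ∈ Mset, ∃ v, w = u + v} :=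
      ⟨s, hs, Pi.single j 1, rfl⟩
    rw [hJ] at hx
    simp only [Set.mem_iUnion] at hx
    obtain ⟨l, hl, hxl⟩ := hx
    have hdl : deg l = D := hMset hl
    obtain ⟨kl, hkl, hkllow⟩ := exists_min l (by omega)
    obtain ⟨kt, hkt, hktlow⟩ := exists_min t (by omega)
    have h1 := (mem_cone_iff hM hdl hkl hkllow _).mp hxl
    have h2 := (mem_cone_iff hM hdt hkt hktlow _).mp hmem
    have heq : t = l := can_unique (w := s + Pi.single j 1)
      ⟨hdt, hkt, hktlow, h2.1, h2.2⟩ ⟨hdl, hkl, hkllow, h1.1, h1.2⟩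
    rw [heq]; exact hl
  · intro hcomp
    ext w
    simp only [Set.mem_setOf_eq, Set.mem_iUnion]
    constructor
    · rintro ⟨u, hu, v, rfl⟩
      suffices h : ∀ m, ∀ u v : Fin n → ℕ, u ∈ Mset → deg v = m →
          ∃ t, t ∈ Mset ∧ u + v ∈ cone M t by
        obtain ⟨t, ht, hmt⟩ := h (deg v) u v hu rfl
        exact ⟨t, ht, hmt⟩
      intro m
      induction m using Nat.strong_induction_on with
      | _ m ih =>
        intro u v hu hv
        rcases Nat.eq_zero_or_pos m with rfl | hm
        · have hv0 : ∀ i, v i = 0 := by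
            intro i
            have : ∑ i, v i = 0 := hv
            exact Finset.sum_eq_zero_iff.mp this i (Finset.mem_univ i)
          exact ⟨u, hu, v, fun i hi => absurd (hv0 i) hi, rfl⟩
        · obtain ⟨j, hj, -⟩ := exists_min v (by omega)
          set v' : Fin n → ℕ := v - Pi.single j 1 with hv'def
          have hve : v = v' + Pi.single j 1 := by
            funext i
            rcases eq_or_ne i j with rfl | hi
            · simp only [hv'def, Pi.add_apply, Pi.sub_apply, Pi.single_eq_same]
              omega
            · simp [hv'def, Pi.sub_apply, Pi.single_eq_of_ne hi]
          have hdv' : deg v' = m - 1 := by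
            have := deg_add v' (Pi.single j 1)
            rw [← hve, hv, deg_single] at this
            omega
          obtain ⟨s, hsM, hscone⟩ := ih (m - 1) (by omega) u v' hu hdv'
          have hds : deg s = D := hMset hsM
          obtain ⟨k', hk', hk'low⟩ := exists_min s (by omega)
          have hw' := (mem_cone_iff hM hds hk' hk'low _).mp hscone
          have hwe : u + v = (u + v') + Pi.single j 1 := by
            rw [hve, add_assoc]
          rcases le_or_gt j k' with hjk | hjk
          · refine ⟨s, hsM, (mem_cone_iff hM hds hk' hk'low _).mpr ⟨?_, ?_⟩⟩
            · intro i hi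
              have hij : i ≠ j := by omega
              have h1 : (u + v) i = (u + v') i + (Pi.single j 1 : Fin n → ℕ) i := by rw [hwe]; rfl
              rw [Pi.single_eq_of_ne hij] at h1
              rw [h1, add_zero]
              exact hw'.1 i hi
            · have h1 : (u + v) k' = (u + v') k' + (Pi.single j 1 : Fin n → ℕ) k' := by rw [hwe]; rfl
              have := hw'.2
              omega
          · have hxw : ∀ i, k' < i → (s + (Pi.single j 1 : Fin n → ℕ)) i = (u + v) i := by
              intro i hi
              have h1 : (u + v) i = (u + v') i + (Pi.single j 1 : Fin n → ℕ) i := by rw [hwe]; rfl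
              have h2 := hw'.1 i hi
              show s i + (Pi.single j 1 : Fin n → ℕ) i = (u + v) i
              rw [h1, h2]
            obtain ⟨t, k, hdt, hk, hklow, hteq, htle⟩ :=
              exists_can D hD (D + 1) (s + Pi.single j 1)
                (by rw [deg_add, hds, deg_single]) (by omega)
            have hxcone : s + Pi.single j 1 ∈ cone M t :=
              (mem_cone_iff hM hdt hk hklow _).mpr ⟨hteq, htle⟩
            have hjMs : j ∉ M s := by
              rw [hM s hds k' ⟨hk', hk'low⟩]
              simp only [Set.mem_setOf_eq]
              omega
            have htM : t ∈ Mset := hcomp t s hdt hds ⟨j, hjMs, hxcone⟩ hsM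
            have hk'k : k' ≤ k := by
              by_contra h
              push_neg at h
              have hs0 : s k = 0 := hk'low k h
              have hkj : k ≠ j := by omega
              have hx0 : (s + (Pi.single j 1 : Fin n → ℕ)) k = 0 := by
                simp [Pi.add_apply, Pi.single_eq_of_ne hkj, hs0]
              omega
            refine ⟨t, htM, (mem_cone_iff hM hdt hk hklow _).mpr ⟨?_, ?_⟩⟩
            · intro i hi
              rw [← hxw i (lt_of_le_of_lt hk'k hi)]
              exact hteq i hi
            · rcases eq_or_lt_of_le hk'k with heq | hlt
              · have hk'j : k' ≠ j := by omega
                have hx1 : (s + (Pi.single j 1 : Fin n → ℕ)) k' = s k' := by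
                  simp [Pi.add_apply, Pi.single_eq_of_ne hk'j]
                have hx2 : (u + v) k' = (u + v') k' + (Pi.single j 1 : Fin n → ℕ) k' := by
                  rw [hwe]; rfl
                rw [Pi.single_eq_of_ne hk'j] at hx2
                have := hw'.2
                rw [← heq] at htle ⊢
                omega
              · rw [← hxw k hlt]
                exact htle
    · rintro ⟨l, hl, v, hsupp, rfl⟩
      exact ⟨l, hl, v, rfl⟩
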